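/- Let A be a K-algebra satisfying additionally J₂¬x = ¬J₂x for all x. Then the map φ(a) := (J₂a, a ∧ ¬a) from A to the Cartesian product O(A) × D(A) is injective, where O(A) = {x : J₂x = x} and D(A) = {x : J₂x = 0}. -/

import Mathlib

/-- The operations of a Bochvar-type algebra ⟨A, ∨, ¬, J₂, 0, 1⟩. -/
class KOps (α : Type*) where
  sup : α → α → α
  neg : α → α
  J : α → α
  zero : α
  one : α

namespace KOps

variable {α : Type*} [KOps α]

/-- The meet, defined à la De Morgan: x ∧ y := ¬(¬x ∨ ¬y). -/
def meet (x y : α) : α := neg (sup (neg x) (neg y))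

end KOps

open KOps

/-- A K-algebra: an algebra satisfying the identities K1–K12 axiomatising
the variety generated by Bochvar algebras. (K5 holds by definition of `meet`.) -/
class KAlgebra (α : Type*) [KOps α] : Prop where
  K1 : ∀ x : α, sup x x = x
  K2 : ∀ x y : α, sup x y = sup y x
  K3 : ∀ x y z : α, sup (sup x y) z = sup x (sup y z)
  K4 : ∀ x : α, neg (neg x) = x
  K5 : ∀ x y : α, meet x y = neg (sup (neg x) (neg y))
  K6 : ∀ x y : α, meet x (sup (neg x) y) = meet x y
  K7 : ∀ x : α, sup zero x = x
  K8 : (one : α) = neg zero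
  K9 : ∀ x : α, sup (J x) (neg (J x)) = one
  K10 : ∀ x y : α, sup x (J y) = sup x (J (sup x y))
  K11 : ∀ x : α, meet x (J x) = x
  K12 : ∀ x : α, J (meet x (neg x)) = zero

/-! The instance `y = 0` of K10 gives `x ∨ J₂x = x`. Together with K11 (`x ∧ J₂x = x`) and K6
this yields the decomposition `a = J₂a ∨ (a ∧ ¬a)`, so `(p, q) ↦ p ∨ q` is a left inverse of `φ`.
Idempotence of `J₂` comes from the same two absorption laws: for `a = J₂x` and `b = J₂a` we have
`a ∨ b = a` and `a ∧ b = a`, while `¬b ∧ a = (¬b ∧ b) ∧ a = 0` by K9, hence `b = b ∨ (¬b ∧ a) = a`. -/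

namespace KAlgebra

variable {α : Type*} [KOps α] [KAlgebra α]

lemma neg_meet (x y : α) : neg (meet x y) = sup (neg x) (neg y) := by
  rw [meet, K4]

lemma meet_comm (x y : α) : meet x y = meet y x := by
  rw [meet, meet, K2]

lemma meet_assoc (x y z : α) : meet (meet x y) z = meet x (meet y z) := by
  simp only [meet, K4, K3]

lemma sup_zero (x : α) : sup x zero = x := by
  rw [K2, K7]

lemma sup_neg_meet (x y : α) : sup x (meet (neg x) y) = sup x y := by
  have h := congrArg neg (K6 (neg x) (neg y))
  simpa only [neg_meet, meet, K4] using h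

lemma J_zero : J (zero : α) = zero := by
  have h : meet (zero : α) (neg zero) = zero := by
    rw [meet, K4, sup_zero, K4]
  simpa only [h] using K12 (zero : α)

lemma sup_J_self (x : α) : sup x (J x) = x := by
  have h := K10 x zero
  rwa [J_zero, sup_zero, eq_comm] at h

lemma sup_neg_J_eq_neg (x : α) : sup (neg x) (neg (J x)) = neg x := by
  simpa only [neg_meet] using congrArg neg (K11 x)

lemma meet_neg_self_eq_meet_neg_J (x : α) : meet x (neg x) = meet x (neg (J x)) := by
  rw [← K6 x (neg (J x)), sup_neg_J_eq_neg]

lemma neg_J_meet_J (x : α) : meet (neg (J x)) (J x) = zero := by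
  rw [meet, K4, K9, K8, K4]

lemma zero_meet_J (x : α) : meet zero (J x) = zero := by
  have h : sup (one : α) (neg (J x)) = one := by
    rw [← K9 x, K3, K1]
  rw [meet, ← K8, h, K8, K4]

lemma J_idem (x : α) : J (J x) = J x := by
  set a := J x
  set b := J a
  have h : meet (neg b) a = zero := by
    rw [← K11 a, meet_comm a, ← meet_assoc, neg_J_meet_J, zero_meet_J]
  calc b = sup b (meet (neg b) a) := by rw [h, sup_zero]
    _ = a := by rw [sup_neg_meet, K2, sup_J_self]

lemma J_sup_meet_self_neg (x : α) : sup (J x) (meet x (neg x)) = x := by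
  rw [meet_neg_self_eq_meet_neg_J, meet_comm, sup_neg_meet, K2, sup_J_self]

end KAlgebra

open KAlgebra in
theorem stmt16_general {α : Type*} [KOps α] [KAlgebra α]
    (φ : α → α × α) (hφ : ∀ a : α, φ a = (J a, meet a (neg a))) :
    (∀ a : α, (φ a).1 ∈ {x : α | J x = x} ∧ (φ a).2 ∈ {x : α | J x = zero}) ∧
    Function.Injective φ := by
  have hinv : Function.LeftInverse (fun p : α × α => sup p.1 p.2) φ := fun a => by
    rw [hφ]
    exact J_sup_meet_self_neg a
  refine ⟨fun a => ?_, hinv.injective⟩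
  rw [hφ]
  exact ⟨J_idem a, K12 a⟩

/-- φ(a) = (J₂a, a ∧ ¬a) is a well-defined injective map into O(A) × D(A). -/
theorem stmt16 {α : Type*} [KOps α] [KAlgebra α]
    (hJ : ∀ x : α, J (neg x) = neg (J x))
    (φ : α → α × α) (hφ : ∀ a : α, φ a = (J a, meet a (neg a))) :
    (∀ a : α, (φ a).1 ∈ {x : α | J x = x} ∧ (φ a).2 ∈ {x : α | J x = zero}) ∧
    Function.Injective φ :=
  stmt16_general φ hφ
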